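/- arXiv:1603.00770 — 6 statements merged into one kernel-verified Lean document; each statement's English description precedes it below -/
import Mathlib

section
/- Let T be a tree rooted at r. Then r is α-critical in T if and only if for every child a of r, the vertex a is not α-critical in the subtree T_a rooted at a. -/
/-!
Edges leave the subtree `T_a` of a child `a` of `r` only towards `r`, so the part of an independent
set of `T - r` outside `T_a` combines with any independent set of `T_a`.

If `r` is critical, a maximum independent set contains `r`, hence its trace on `T_a` misses `a`.
Should `a` be critical in `T_a`, replacing `r` and this trace by a maximum independent set of `T_a`
gives an independent set of `T - r` of the same size, a contradiction.

If no child `a` is critical in `T_a`, the trace on `T_a` of a maximum independent set of `T - r`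
can be replaced by a maximum independent set of `T_a - a`. As `a` is the only neighbour of `r` in
`T_a`, repeating this for every child removes all neighbours of `r`, and adding `r` shows that `r`
is critical.
-/

open SimpleGraph

/-- The maximum size of an independent set of `G` contained in the vertex set `A`
(i.e. the independence number of the induced subgraph `G[A]`). -/
noncomputable def alphaOn {V : Type*} [Fintype V] (G : SimpleGraph V) (A : Set V) : ℕ :=
  sSup {n | ∃ s : Finset V, ↑s ⊆ A ∧ (↑s : Set V).Pairwise (fun a b => ¬ G.Adj a b) ∧ s.card = n}

/-- The open neighborhood of a set of vertices. -/
def nbhd {V : Type*} (G : SimpleGraph V) (S : Set V) : Set V :=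
  {v | v ∉ S ∧ ∃ u ∈ S, G.Adj u v}

/-- `v` is α-critical in the induced subgraph `G[A]`. -/
def critOn {V : Type*} [Fintype V] (G : SimpleGraph V) (A : Set V) (v : V) : Prop :=
  alphaOn G A = 1 + alphaOn G (A \ {v})

/-- For a tree `T` rooted at `r`, the vertex set of the subtree rooted at `a`:
those vertices reachable from `a` without passing through `r`. -/
def descend {V : Type*} (T : SimpleGraph V) (r a : V) : Set V :=
  {v | ∃ p : T.Walk a v, r ∉ p.support}

/-- The connected component of `v₀` in `G - X`: vertices reachable from `v₀` avoiding `X`. -/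
def avoidComp {V : Type*} (G : SimpleGraph V) (X : Set V) (v₀ : V) : Set V :=
  {v | ∃ p : G.Walk v₀ v, ∀ x ∈ p.support, x ∉ X}

section IndependenceNumber

variable {V : Type*} [Fintype V] (G : SimpleGraph V)

lemma bddAbove_indepCards (A : Set V) :
    BddAbove {n | ∃ s : Finset V, ↑s ⊆ A ∧ (↑s : Set V).Pairwise (fun a b => ¬ G.Adj a b) ∧
      s.card = n} :=
  ⟨Fintype.card V, by rintro n ⟨s, -, -, rfl⟩; exact s.card_le_univ⟩

variable {G}

lemma card_le_alphaOn {A : Set V} {s : Finset V} (hsA : ↑s ⊆ A) (hs : G.IsIndepSet ↑s) :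
    s.card ≤ alphaOn G A :=
  le_csSup (bddAbove_indepCards G A) ⟨s, hsA, hs, rfl⟩

variable (G)

lemma exists_isIndepSet_card_eq_alphaOn (A : Set V) :
    ∃ s : Finset V, ↑s ⊆ A ∧ G.IsIndepSet ↑s ∧ s.card = alphaOn G A :=
  Nat.sSup_mem (h₂ := bddAbove_indepCards G A) ⟨0, by exact ⟨∅, by simp⟩⟩

lemma alphaOn_mono {A B : Set V} (h : A ⊆ B) : alphaOn G A ≤ alphaOn G B := by
  obtain ⟨s, hsA, hs, hcard⟩ := exists_isIndepSet_card_eq_alphaOn G A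
  exact hcard ▸ card_le_alphaOn (hsA.trans h) hs

lemma alphaOn_le_one_add_alphaOn_diff (A : Set V) (v : V) :
    alphaOn G A ≤ 1 + alphaOn G (A \ {v}) := by
  classical
  obtain ⟨s, hsA, hs, hcard⟩ := exists_isIndepSet_card_eq_alphaOn G A
  have hle : (s.erase v).card ≤ alphaOn G (A \ {v}) :=
    card_le_alphaOn (by rw [Finset.coe_erase]; exact Set.sdiff_subset_sdiff_left hsA)
      (hs.mono (by simp))
  have := Finset.pred_card_le_card_erase (s := s) (a := v)
  omega

lemma critOn_iff_alphaOn_diff_lt (A : Set V) (v : V) :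
    critOn G A v ↔ alphaOn G (A \ {v}) < alphaOn G A := by
  have := alphaOn_le_one_add_alphaOn_diff G A v
  have := alphaOn_mono G (A := A \ {v}) Set.sdiff_subset
  unfold critOn
  omega

end IndependenceNumber

section Exchange

variable {V : Type*} [DecidableEq V] {G : SimpleGraph V} {B X : Set V} [DecidablePred (· ∈ B)]
  {s m : Finset V}

lemma isIndepSet_filter_notMem_union (hB : nbhd G B ⊆ X) (hsX : Disjoint (↑s : Set V) X)
    (hs : G.IsIndepSet ↑s) (hmB : ↑m ⊆ B) (hm : G.IsIndepSet ↑m) :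
    G.IsIndepSet ↑(s.filter (· ∉ B) ∪ m) := by
  have hcross : ∀ x ∈ s.filter (· ∉ B), ∀ y ∈ m, ¬ G.Adj y x := fun x hx y hy hyx => by
    rw [Finset.mem_filter] at hx
    exact Set.disjoint_left.1 hsX hx.1 (hB ⟨hx.2, y, hmB hy, hyx⟩)
  intro x hx y hy hxy
  simp only [Finset.coe_union, Finset.coe_filter, Set.mem_union, Set.mem_ofPred_eq,
    Finset.mem_coe] at hx hy
  rcases hx with hx | hx <;> rcases hy with hy | hy
  · exact hs hx.1 hy.1 hxy
  · exact fun h => hcross x (Finset.mem_filter.2 hx) y hy h.symm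
  · exact hcross y (Finset.mem_filter.2 hy) x hx
  · exact hm hx hy hxy

lemma card_filter_notMem_union (hmB : ↑m ⊆ B) :
    (s.filter (· ∉ B) ∪ m).card = (s.filter (· ∉ B)).card + m.card :=
  Finset.card_union_of_disjoint <| Finset.disjoint_left.2 fun _ hx hxm =>
    (Finset.mem_filter.1 hx).2 (hmB hxm)

end Exchange

section RootedTree

variable {V : Type*} {T : SimpleGraph V} {r a : V}

lemma mem_descend_self (h : r ≠ a) : a ∈ descend T r a :=
  ⟨Walk.nil, by simpa using h⟩

lemma root_notMem_descend : r ∉ descend T r a :=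
  fun ⟨p, hp⟩ => hp p.end_mem_support

lemma nbhd_descend_subset : nbhd T (descend T r a) ⊆ {r} := by
  rintro w ⟨hw, v, ⟨p, hp⟩, hvw⟩
  by_contra hwr
  refine hw ⟨p.concat hvw, ?_⟩
  rw [Walk.support_concat, List.mem_append, List.mem_singleton]
  exact fun h => h.elim hp fun h => hwr h.symm

/-- In an acyclic graph the edge `r – b` is a bridge, so every walk from `a` to `b` extended by
`r – a` uses it: either it is the edge `r – a`, or the walk passes through `r`. -/
lemma eq_of_adj_of_mem_descend (hT : T.IsAcyclic) {b : V} (hra : T.Adj r a) (hrb : T.Adj r b)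
    (hb : b ∈ descend T r a) : b = a := by
  obtain ⟨p, hp⟩ := hb
  have hedge := isBridge_iff_forall_walk_mem_edges.1
    (isAcyclic_iff_forall_adj_isBridge.1 hT hrb) (Walk.cons hra p)
  rw [Walk.edges_cons, List.mem_cons] at hedge
  rcases hedge with h | h
  · exact Sym2.congr_right.1 h
  · exact absurd (p.fst_mem_support_of_mem_edges h) hp

end RootedTree

section CriticalRoot

variable {V : Type*} [Fintype V] {T : SimpleGraph V} {r a : V}

lemma not_critOn_descend_of_critOn_root (hr : critOn T Set.univ r) (hra : T.Adj r a) :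
    ¬ critOn T (descend T r a) a := by
  classical
  intro ha
  rw [critOn_iff_alphaOn_diff_lt] at hr ha
  obtain ⟨S, -, hS, hScard⟩ := exists_isIndepSet_card_eq_alphaOn T Set.univ
  have hrS : r ∈ S := by
    by_contra hrS
    have := card_le_alphaOn (A := Set.univ \ {r}) (by simpa [Set.subset_def]) hS
    omega
  set s := S.erase r
  have hs : T.IsIndepSet ↑s := hS.mono (by simp [s])
  have hsr : r ∉ s := by simp [s]
  have has : a ∉ s := fun has =>
    hS (Finset.mem_coe.2 hrS) (Finset.mem_coe.2 (Finset.mem_of_mem_erase has)) hra.ne hra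
  obtain ⟨m, hmB, hm, hmcard⟩ := exists_isIndepSet_card_eq_alphaOn T (descend T r a)
  have hinside : (s.filter (· ∈ descend T r a)).card ≤ alphaOn T (descend T r a \ {a}) :=
    card_le_alphaOn (fun _ hx => ⟨(Finset.mem_filter.1 hx).2,
      by rintro rfl; exact has (Finset.mem_filter.1 hx).1⟩) (hs.mono (s.filter_subset _))
  have hswap := card_le_alphaOn (A := Set.univ \ {r})
    (fun x hx => ⟨trivial, by
      rintro rfl
      simp only [Finset.coe_union, Finset.coe_filter, Set.mem_union, Finset.mem_coe] at hx
      exact hx.elim (fun h => hsr h.1) fun h => root_notMem_descend (hmB h)⟩)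
    (isIndepSet_filter_notMem_union nbhd_descend_subset (Set.disjoint_singleton_right.2 hsr)
      hs hmB hm)
  rw [card_filter_notMem_union hmB] at hswap
  have : s.card + 1 = S.card := Finset.card_erase_add_one hrS
  have := Finset.card_filter_add_card_filter_not (s := s) (· ∈ descend T r a)
  omega

variable [DecidableRel T.Adj]

lemma exists_card_le_filter_adj_ssubset (hT : T.IsAcyclic)
    (hchild : ∀ a, T.Adj r a → ¬ critOn T (descend T r a) a) (hra : T.Adj r a) {s : Finset V}
    (hsr : r ∉ s) (hs : T.IsIndepSet ↑s) (has : a ∈ s) :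
    ∃ t : Finset V, r ∉ t ∧ T.IsIndepSet ↑t ∧ s.card ≤ t.card ∧
      t.filter (T.Adj r) ⊂ s.filter (T.Adj r) := by
  classical
  have hnc := hchild a hra
  rw [critOn_iff_alphaOn_diff_lt, not_lt] at hnc
  obtain ⟨m, hmB, hm, hmcard⟩ := exists_isIndepSet_card_eq_alphaOn T (descend T r a \ {a})
  have hmB' : ↑m ⊆ descend T r a := hmB.trans Set.sdiff_subset
  have hinside : (s.filter (· ∈ descend T r a)).card ≤ m.card :=
    hmcard ▸ (card_le_alphaOn (fun _ hx => (Finset.mem_filter.1 hx).2)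
      (hs.mono (s.filter_subset _))).trans hnc
  refine ⟨s.filter (· ∉ descend T r a) ∪ m, ?_,
    isIndepSet_filter_notMem_union nbhd_descend_subset (Set.disjoint_singleton_right.2 hsr)
      hs hmB' hm, ?_, ?_⟩
  · simp only [Finset.mem_union, Finset.mem_filter, not_or, not_and]
    exact ⟨fun h => absurd h hsr, fun h => root_notMem_descend (hmB' h)⟩
  · rw [card_filter_notMem_union hmB']
    have := Finset.card_filter_add_card_filter_not (s := s) (· ∈ descend T r a)
    omega
  · have hsub : (s.filter (· ∉ descend T r a) ∪ m).filter (T.Adj r) ⊆ s.filter (T.Adj r) := by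
      intro b hb
      simp only [Finset.mem_filter, Finset.mem_union] at hb ⊢
      refine ⟨hb.1.elim And.left fun hbm => ?_, hb.2⟩
      exact absurd (eq_of_adj_of_mem_descend hT hra hb.2 (hmB' hbm)) (hmB hbm).2
    refine (Finset.ssubset_iff_of_subset hsub).2 ⟨a, Finset.mem_filter.2 ⟨has, hra⟩, ?_⟩
    simp only [Finset.mem_filter, Finset.mem_union, not_and]
    exact fun h _ => h.elim (fun h => h.2 (mem_descend_self hra.ne)) fun h => (hmB h).2 rfl

lemma exists_isIndepSet_card_le_forall_not_adj (hT : T.IsAcyclic)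
    (hchild : ∀ a, T.Adj r a → ¬ critOn T (descend T r a) a) (s : Finset V) (hsr : r ∉ s)
    (hs : T.IsIndepSet ↑s) :
    ∃ t : Finset V, r ∉ t ∧ T.IsIndepSet ↑t ∧ s.card ≤ t.card ∧ ∀ b ∈ t, ¬ T.Adj r b := by
  by_cases h : ∃ a ∈ s, T.Adj r a
  · obtain ⟨a, has, hra⟩ := h
    obtain ⟨t, htr, ht, hst, hlt⟩ := exists_card_le_filter_adj_ssubset hT hchild hra hsr hs has
    obtain ⟨u, hur, hu, htu, hu_no⟩ :=
      exists_isIndepSet_card_le_forall_not_adj hT hchild t htr ht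
    exact ⟨u, hur, hu, hst.trans htu, hu_no⟩
  · push Not at h
    exact ⟨s, hsr, hs, le_rfl, h⟩
termination_by (s.filter (T.Adj r)).card
decreasing_by exact Finset.card_lt_card hlt

lemma critOn_root_of_forall_not_critOn_descend (hT : T.IsAcyclic)
    (hchild : ∀ a, T.Adj r a → ¬ critOn T (descend T r a) a) : critOn T Set.univ r := by
  classical
  rw [critOn_iff_alphaOn_diff_lt]
  obtain ⟨s, hsA, hs, hcard⟩ := exists_isIndepSet_card_eq_alphaOn T (Set.univ \ {r})
  obtain ⟨t, htr, ht, hst, hno⟩ :=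
    exists_isIndepSet_card_le_forall_not_adj hT hchild s (fun h => (hsA h).2 rfl) hs
  have hins : T.IsIndepSet ↑(insert r t) := by
    rw [Finset.coe_insert]
    exact ht.insert fun b hb _ => ⟨hno b hb, fun h => hno b hb h.symm⟩
  have := card_le_alphaOn (Set.subset_univ _) hins
  rw [Finset.card_insert_of_notMem htr] at this
  omega

end CriticalRoot

theorem stmt2 {V : Type*} [Fintype V] (T : SimpleGraph V) (hT : T.IsTree) (r : V) :
    critOn T Set.univ r ↔ ∀ a : V, T.Adj r a → ¬ critOn T (descend T r a) a := by
  classical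
  exact ⟨fun hr _ hra => not_critOn_descend_of_critOn_root hr hra,
    critOn_root_of_forall_not_critOn_descend hT.isAcyclic⟩
end

section
/- Let T be a tree and Z a set of vertices with α(T) > α(T - Z). Then there exist two (possibly equal) vertices u, v ∈ Z ∩ V(T) such that α(T) > α(T - {u, v}). -/
/-!
A tree is bipartite, say with sides `A` and `Aᶜ`. For maximum independent sets `M`, `N` the
set `M ⊓ N` (union on `A`, intersection on `Aᶜ`) and the dual `M ⊔ N` are independent with
`|M ⊓ N| + |M ⊔ N| = |M| + |N|`, so both are maximum. A vertex of `A` is avoided by `M ⊓ N` when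
it is avoided by both, and a vertex of `Aᶜ` when it is avoided by one of them (dually for `⊔`).
If every pair `u, v ∈ Z` is avoided by some maximum independent set, then meets along `Z \ A`
followed by joins along `Z ∩ A` produce one avoiding all of `Z`, i.e. `α(T - Z) = α(T)`.
-/

open SimpleGraph

open Finset

namespace SimpleGraph

variable {V : Type*} {G : SimpleGraph V}

section alphaOn

variable [Fintype V] {A : Set V}

lemma bddAbove_alphaOn_set (G : SimpleGraph V) (A : Set V) :
    BddAbove {n | ∃ s : Finset V, ↑s ⊆ A ∧ G.IsIndepSet ↑s ∧ #s = n} :=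
  ⟨Fintype.card V, by rintro _ ⟨s, -, -, rfl⟩; exact s.card_le_univ⟩

lemma card_le_alphaOn {s : Finset V} (hsA : ↑s ⊆ A) (hs : G.IsIndepSet ↑s) :
    #s ≤ alphaOn G A :=
  le_csSup (bddAbove_alphaOn_set G A) ⟨s, hsA, hs, rfl⟩

lemma exists_isIndepSet_card_eq_alphaOn (G : SimpleGraph V) (A : Set V) :
    ∃ s : Finset V, ↑s ⊆ A ∧ G.IsIndepSet ↑s ∧ #s = alphaOn G A := by
  refine Nat.sSup_mem ?_ (bddAbove_alphaOn_set G A)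
  exact ⟨0, ∅, by simp, by simp, rfl⟩

lemma alphaOn_univ : alphaOn G Set.univ = G.indepNum := by
  obtain ⟨s, -, hs, hcard⟩ := exists_isIndepSet_card_eq_alphaOn G Set.univ
  obtain ⟨t, ht⟩ := G.exists_isNIndepSet_indepNum
  refine le_antisymm (hcard ▸ hs.card_le_indepNum) ?_
  exact ht.card_eq ▸ card_le_alphaOn (Set.subset_univ _) ht.isIndepSet

lemma indepNum_le_alphaOn_iff :
    G.indepNum ≤ alphaOn G A ↔ ∃ M : Finset V, G.IsMaximumIndepSet M ∧ ↑M ⊆ A := by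
  constructor
  · intro h
    obtain ⟨s, hsA, hs, hcard⟩ := exists_isIndepSet_card_eq_alphaOn G A
    exact ⟨s, ⟨hs, fun t ht => (ht.card_le_indepNum.trans h).trans hcard.ge⟩, hsA⟩
  · rintro ⟨M, hM, hMA⟩
    exact maximumIndepSet_card_eq_indepNum M hM ▸ card_le_alphaOn hMA hM.isIndepSet

end alphaOn

lemma IsBipartite.exists_isBipartiteWith_compl [Fintype V] [DecidableEq V] (hG : G.IsBipartite) :
    ∃ A : Finset V, G.IsBipartiteWith ↑A ↑Aᶜ := by
  obtain ⟨c, hc⟩ := hG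
  refine ⟨({v | c v = 0} : Finset V), ⟨by simp [Set.disjoint_left], fun v w hvw => ?_⟩⟩
  have := hc hvw
  simp only [top_adj] at this
  simp only [coe_filter, coe_compl, Set.mem_compl_iff, Set.mem_ofPred_eq, mem_univ, true_and]
  omega

section BipartiteMeet

variable [DecidableEq V] {A M N : Finset V}

/-- The meet in the lattice of maximum independent sets for the bipartition `(A, Aᶜ)`;
the join is `bipartiteMeet Aᶜ M N`. -/
def bipartiteMeet (A M N : Finset V) : Finset V :=
  (M ∪ N) ∩ A ∪ (M ∩ N) \ A

lemma notMem_bipartiteMeet_of_mem {x : V} (hx : x ∈ A) :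
    x ∉ bipartiteMeet A M N ↔ x ∉ M ∧ x ∉ N := by
  simp [bipartiteMeet, hx]

lemma notMem_bipartiteMeet_of_notMem {x : V} (hx : x ∉ A) :
    x ∉ bipartiteMeet A M N ↔ x ∉ M ∨ x ∉ N := by
  simp [bipartiteMeet, hx, imp_iff_not_or]

variable [Fintype V]

lemma card_bipartiteMeet_add_card_bipartiteMeet_compl (A M N : Finset V) :
    #(bipartiteMeet A M N) + #(bipartiteMeet Aᶜ M N) = #M + #N := by
  have hunion : bipartiteMeet A M N ∪ bipartiteMeet Aᶜ M N = M ∪ N := by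
    ext x; by_cases hx : x ∈ A <;> simp [bipartiteMeet, hx] <;> tauto
  have hinter : bipartiteMeet A M N ∩ bipartiteMeet Aᶜ M N = M ∩ N := by
    ext x; by_cases hx : x ∈ A <;> simp [bipartiteMeet, hx] <;> tauto
  rw [← card_union_add_card_inter, hunion, hinter, card_union_add_card_inter]

variable (hA : G.IsBipartiteWith ↑A ↑Aᶜ)
include hA

lemma IsBipartiteWith.compl_symm : G.IsBipartiteWith ↑Aᶜ ↑Aᶜᶜ := by
  rw [compl_compl]
  exact hA.symm

lemma IsBipartiteWith.isIndepSet_bipartiteMeet (hM : G.IsIndepSet ↑M) (hN : G.IsIndepSet ↑N) :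
    G.IsIndepSet ↑(bipartiteMeet A M N) := by
  have key : ∀ ⦃a b : V⦄, a ∈ bipartiteMeet A M N → b ∈ bipartiteMeet A M N → a ∈ A → b ∉ A →
      ¬ G.Adj a b := by
    intro a b ha hb haA hbA hab
    simp only [bipartiteMeet, mem_union, mem_inter, mem_sdiff, haA, hbA, and_true, and_false,
      not_true_eq_false, not_false_eq_true, or_false, false_or] at ha hb
    rcases ha with ha | ha
    · exact hM ha hb.1 hab.ne hab
    · exact hN ha hb.2 hab.ne hab
  intro x hx y hy _ hadj
  rcases hA.mem_of_adj hadj with ⟨hxA, hyA⟩ | ⟨hxA, hyA⟩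
  · exact key hx hy hxA (by simpa using hyA) hadj
  · exact key hy hx hyA (by simpa using hxA) hadj.symm

lemma IsBipartiteWith.isMaximumIndepSet_bipartiteMeet (hM : G.IsMaximumIndepSet M)
    (hN : G.IsMaximumIndepSet N) : G.IsMaximumIndepSet (bipartiteMeet A M N) := by
  refine ⟨hA.isIndepSet_bipartiteMeet hM.isIndepSet hN.isIndepSet, fun t ht => ?_⟩
  have hjoin := hN.maximum _ (hA.compl_symm.isIndepSet_bipartiteMeet hM.isIndepSet hN.isIndepSet)
  have hsum := card_bipartiteMeet_add_card_bipartiteMeet_compl A M N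
  have ht := hM.maximum t ht
  omega

lemma IsBipartiteWith.exists_isMaximumIndepSet_disjoint_union {U S : Finset V} (hU : U ⊆ A)
    (hS : Disjoint S A) (hbase : ∃ M, G.IsMaximumIndepSet M ∧ Disjoint M U)
    (hwit : ∀ v ∈ S, ∃ M, G.IsMaximumIndepSet M ∧ Disjoint M U ∧ v ∉ M) :
    ∃ M, G.IsMaximumIndepSet M ∧ Disjoint M (U ∪ S) := by
  induction S using Finset.induction_on with
  | empty => simpa using hbase
  | insert v S _ ih =>
    obtain ⟨N, hN, hNUS⟩ := ih (hS.mono_left (subset_insert v S))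
      fun w hw => hwit w (mem_insert_of_mem hw)
    obtain ⟨Mv, hMv, hMvU, hvMv⟩ := hwit v (mem_insert_self v S)
    rw [disjoint_union_right] at hNUS
    refine ⟨bipartiteMeet A N Mv, hA.isMaximumIndepSet_bipartiteMeet hN hMv,
      disjoint_right.2 fun x hx => ?_⟩
    rcases mem_union.1 hx with hxU | hxS
    · exact (notMem_bipartiteMeet_of_mem (hU hxU)).2
        ⟨disjoint_right.1 hNUS.1 hxU, disjoint_right.1 hMvU hxU⟩
    · refine (notMem_bipartiteMeet_of_notMem (Finset.disjoint_left.1 hS hxS)).2 ?_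
      rcases mem_insert.1 hxS with rfl | hxS
      · exact Or.inr hvMv
      · exact Or.inl (disjoint_right.1 hNUS.2 hxS)

lemma IsBipartiteWith.exists_isMaximumIndepSet_disjoint_of_forall_pair (Z : Finset V)
    (hZ : ∀ u ∈ Z, ∀ v ∈ Z, ∃ M, G.IsMaximumIndepSet M ∧ u ∉ M ∧ v ∉ M) :
    ∃ M, G.IsMaximumIndepSet M ∧ Disjoint M Z := by
  obtain ⟨M₀, hM₀⟩ := G.maximumIndepSet_exists
  have hZB : ∃ M, G.IsMaximumIndepSet M ∧ Disjoint M (Z \ A) := by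
    simpa using hA.exists_isMaximumIndepSet_disjoint_union (empty_subset A) sdiff_disjoint
      ⟨M₀, hM₀, disjoint_empty_right M₀⟩ fun v hv => by
        obtain ⟨M, hM, hvM, -⟩ := hZ v (mem_sdiff.1 hv).1 v (mem_sdiff.1 hv).1
        exact ⟨M, hM, disjoint_empty_right M, hvM⟩
  have hZA : ∀ u ∈ Z ∩ A, ∃ M, G.IsMaximumIndepSet M ∧ Disjoint M (Z \ A) ∧ u ∉ M := by
    intro u hu
    obtain ⟨huZ, huA⟩ := mem_inter.1 hu
    obtain ⟨M, hM, hMuZ⟩ := hA.exists_isMaximumIndepSet_disjoint_union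
      (singleton_subset_iff.2 huA) sdiff_disjoint
      (by
        obtain ⟨M, hM, huM, -⟩ := hZ u huZ u huZ
        exact ⟨M, hM, disjoint_singleton_right.2 huM⟩)
      fun v hv => by
        obtain ⟨M, hM, huM, hvM⟩ := hZ u huZ v (mem_sdiff.1 hv).1
        exact ⟨M, hM, disjoint_singleton_right.2 huM, hvM⟩
    rw [disjoint_union_right, disjoint_singleton_right] at hMuZ
    exact ⟨M, hM, hMuZ.2, hMuZ.1⟩
  obtain ⟨M, hM, hMZ⟩ := hA.compl_symm.exists_isMaximumIndepSet_disjoint_union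
    (fun x hx => mem_compl.2 (mem_sdiff.1 hx).2)
    (disjoint_compl_right.mono_left inter_subset_right) hZB hZA
  exact ⟨M, hM, by rwa [sdiff_union_inter] at hMZ⟩

end BipartiteMeet

theorem IsBipartite.exists_pair_alphaOn_compl_lt [Fintype V] (hG : G.IsBipartite) (Z : Set V)
    (h : alphaOn G Zᶜ < alphaOn G Set.univ) :
    ∃ u ∈ Z, ∃ v ∈ Z, alphaOn G ({u, v} : Set V)ᶜ < alphaOn G Set.univ := by
  classical
  obtain ⟨A, hA⟩ := hG.exists_isBipartiteWith_compl
  rw [alphaOn_univ] at h ⊢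
  by_contra! hpair
  obtain ⟨M, hM, hMZ⟩ := hA.exists_isMaximumIndepSet_disjoint_of_forall_pair Z.toFinset
    fun u hu v hv => by
      obtain ⟨M, hM, hMuv⟩ :=
        indepNum_le_alphaOn_iff.1 (hpair u (Set.mem_toFinset.1 hu) v (Set.mem_toFinset.1 hv))
      exact ⟨M, hM, fun huM => hMuv huM (by simp), fun hvM => hMuv hvM (by simp)⟩
  refine h.not_ge (indepNum_le_alphaOn_iff.2 ⟨M, hM, fun x hxM hxZ => ?_⟩)
  exact Finset.disjoint_left.1 hMZ hxM (Set.mem_toFinset.2 hxZ)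

end SimpleGraph

theorem stmt5 {V : Type*} [Fintype V] (T : SimpleGraph V) (hT : T.IsTree) (Z : Set V)
    (h : alphaOn T Zᶜ < alphaOn T Set.univ) :
    ∃ u ∈ Z, ∃ v ∈ Z, alphaOn T ({u, v} : Set V)ᶜ < alphaOn T Set.univ :=
  hT.isBipartite.exists_pair_alphaOn_compl_lt Z h
end

section
/- The clause gadget 𝒢_k has independence number exactly k + 2. -/
open SimpleGraph

/-- Vertices of the clause gadget `𝒢 k`: `L j` is the left vertex `l_{j+1}` (for `j : Fin (k+1)`,
giving `l_1, …, l_{k+1}`), `R j` is the right vertex `r_j` (giving `r_0, …, r_k`), and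
`S j` is the spike vertex `s_{j+1}` (giving `s_1, …, s_k`). -/
inductive GadgetV (k : ℕ) : Type
  | L : Fin (k + 1) → GadgetV k
  | R : Fin (k + 1) → GadgetV k
  | S : Fin k → GadgetV k
  deriving DecidableEq, Fintype

/-- The edges of the clause gadget: the connecting edges `r_j l_{j+1}` and, for each
triangle `T_{m+1}` (with `m : Fin k`), the triangle edges `l_{m+1} r_{m+1}`,
`l_{m+1} s_{m+1}` and `r_{m+1} s_{m+1}`. -/
def gadgetRel (k : ℕ) : GadgetV k → GadgetV k → Prop := fun x y =>
  (∃ j : Fin (k + 1), x = .R j ∧ y = .L j) ∨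
  (∃ m : Fin k,
    (x = .L m.castSucc ∧ y = .R m.succ) ∨
    (x = .L m.castSucc ∧ y = .S m) ∨
    (x = .R m.succ ∧ y = .S m))

/-- The clause gadget `𝒢 k`. -/
def gadget (k : ℕ) : SimpleGraph (GadgetV k) := SimpleGraph.fromRel (gadgetRel k)

/-- Class of a vertex: classes `0,…,k-1` are the triangles, `k` is `{r_0}`, `k+1` is `{l_{k+1}}`. -/
def cls (k : ℕ) : GadgetV k → ℕ
  | .L j => if j.val = k then k + 1 else j.val
  | .R j => if j.val = 0 then k else j.val - 1
  | .S m => m.val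

lemma cls_lt {k : ℕ} (v : GadgetV k) : cls k v < k + 2 := by
  cases v with
  | L j => have := j.isLt; simp only [cls]; split <;> omega
  | R j => have := j.isLt; simp only [cls]; split <;> omega
  | S m => have := m.isLt; simp only [cls]; omega

lemma adj_of_cls_eq {k : ℕ} {a b : GadgetV k} (hne : a ≠ b) (h : cls k a = cls k b) :
    (gadget k).Adj a b := by
  rw [gadget, SimpleGraph.fromRel_adj]
  refine ⟨hne, ?_⟩
  cases a with
  | L i =>
    cases b with
    | L j =>
      exfalso; apply hne
      have hi := i.isLt; have hj := j.isLt
      simp only [cls] at h; split_ifs at h <;>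
        exact congrArg GadgetV.L (Fin.ext (by omega))
    | R j =>
      have hi := i.isLt; have hj := j.isLt
      simp only [cls] at h; split_ifs at h <;> try omega
      rename_i hik hj0
      left; right
      exact ⟨⟨i.val, by omega⟩, Or.inl
        ⟨congrArg GadgetV.L (Fin.ext (show i.val = i.val from rfl)),
         congrArg GadgetV.R (Fin.ext (show j.val = i.val + 1 by omega))⟩⟩
    | S m =>
      have hi := i.isLt; have hm := m.isLt
      simp only [cls] at h; split_ifs at h <;> try omega
      left; right
      exact ⟨m, Or.inr (Or.inl
        ⟨congrArg GadgetV.L (Fin.ext (show i.val = m.val by omega)), rfl⟩)⟩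
  | R i =>
    cases b with
    | L j =>
      have hi := i.isLt; have hj := j.isLt
      simp only [cls] at h; split_ifs at h <;> try omega
      right; right
      exact ⟨⟨j.val, by omega⟩, Or.inl
        ⟨congrArg GadgetV.L (Fin.ext (show j.val = j.val from rfl)),
         congrArg GadgetV.R (Fin.ext (show i.val = j.val + 1 by omega))⟩⟩
    | R j =>
      exfalso; apply hne
      have hi := i.isLt; have hj := j.isLt
      simp only [cls] at h; split_ifs at h <;>
        exact congrArg GadgetV.R (Fin.ext (by omega))
    | S m =>
      have hi := i.isLt; have hm := m.isLt
      simp only [cls] at h; split_ifs at h <;> try omega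
      left; right
      exact ⟨m, Or.inr (Or.inr
        ⟨congrArg GadgetV.R (Fin.ext (show i.val = m.val + 1 by omega)), rfl⟩)⟩
  | S n =>
    cases b with
    | L j =>
      have hn := n.isLt; have hj := j.isLt
      simp only [cls] at h; split_ifs at h <;> try omega
      right; right
      exact ⟨n, Or.inr (Or.inl
        ⟨congrArg GadgetV.L (Fin.ext (show j.val = n.val by omega)), rfl⟩)⟩
    | R j =>
      have hn := n.isLt; have hj := j.isLt
      simp only [cls] at h; split_ifs at h <;> try omega
      right; right
      exact ⟨n, Or.inr (Or.inr
        ⟨congrArg GadgetV.R (Fin.ext (show j.val = n.val + 1 by omega)), rfl⟩)⟩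
    | S m =>
      exfalso; apply hne
      simp only [cls] at h
      exact congrArg GadgetV.S (Fin.ext h)

/-- `S` never occurs as the left argument of `gadgetRel`. -/
lemma not_rel_S {k : ℕ} (m : Fin k) (y : GadgetV k) : ¬ gadgetRel k (.S m) y := by
  rintro (⟨j, hj, -⟩ | ⟨m', (⟨h, -⟩ | ⟨h, -⟩ | ⟨h, -⟩)⟩) <;> simp_all

theorem stmt10 (k : ℕ) (hk : 1 ≤ k) : alphaOn (gadget k) Set.univ = k + 2 := by
  have hub : ∀ n ∈ {n | ∃ s : Finset (GadgetV k), ↑s ⊆ (Set.univ : Set (GadgetV k)) ∧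
      (↑s : Set (GadgetV k)).Pairwise (fun a b => ¬ (gadget k).Adj a b) ∧ s.card = n},
      n ≤ k + 2 := by
    rintro n ⟨s, -, hind, rfl⟩
    calc s.card ≤ (Finset.range (k + 2)).card := by
          apply Finset.card_le_card_of_injOn (cls k)
          · intro a _; simpa using cls_lt a
          · intro a ha b hb hab
            by_contra hne
            exact hind ha hb hne (adj_of_cls_eq hne hab)
      _ = k + 2 := Finset.card_range _
  refine le_antisymm (csSup_le ⟨0, ∅, by simp⟩ hub) ?_
  -- lower bound: the set {R 0, L (last), S m : m}
  apply le_csSup ⟨k + 2, hub⟩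
  refine ⟨insert (.R 0) (insert (.L (Fin.last k))
      ((Finset.univ : Finset (Fin k)).image GadgetV.S)), by simp, ?_, ?_⟩
  · -- pairwise non-adjacent
    have hrel : ∀ x y : GadgetV k,
        (x = .R 0 ∨ x = .L (Fin.last k) ∨ ∃ m, GadgetV.S m = x) →
        (y = .R 0 ∨ y = .L (Fin.last k) ∨ ∃ m, GadgetV.S m = y) →
        ¬ gadgetRel k x y := by
      rintro x y (rfl | rfl | ⟨m, rfl⟩) (rfl | rfl | ⟨m2, rfl⟩) <;>
        rintro (⟨j, hj1, hj2⟩ | ⟨m', (⟨h1, h2⟩ | ⟨h1, h2⟩ | ⟨h1, h2⟩)⟩) <;>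
        (try have hm' := m'.isLt) <;>
        simp_all [Fin.ext_iff, Fin.last, Fin.val_succ, Fin.coe_castSucc] <;>
        omega
    intro a ha b hb hne hadj
    rw [gadget, SimpleGraph.fromRel_adj] at hadj
    simp only [Finset.coe_insert, Set.mem_insert_iff, Finset.coe_image,
      Finset.coe_univ, Set.image_univ, Set.mem_range] at ha hb
    rcases hadj.2 with h | h
    · exact hrel a b ha hb h
    · exact hrel b a hb ha h
  · -- cardinality
    rw [Finset.card_insert_of_notMem, Finset.card_insert_of_notMem,
      Finset.card_image_of_injective _ (fun x y h => by injection h)]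
    · simp <;> omega
    · simp
    · simp [Fin.ext_iff, Fin.last] <;> omega
end

section
/- Every maximum independent set of the clause gadget 𝒢_k contains at least one spike vertex s_i. -/
open SimpleGraph

theorem stmt11 (k : ℕ) (hk : 1 ≤ k) (I : Finset (GadgetV k))
    (hind : (↑I : Set (GadgetV k)).Pairwise (fun a b => ¬ (gadget k).Adj a b))
    (hmax : I.card = alphaOn (gadget k) Set.univ) :
    ∃ m : Fin k, GadgetV.S m ∈ I := by
  by_contra hno
  push_neg at hno
  -- non-adjacency facts for the witness set
  have hRS : ∀ m : Fin k, ¬ (gadget k).Adj (.R 0) (.S m) := by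
    intro m; simp [gadget, gadgetRel, Fin.ext_iff]
  have hLS : ∀ m : Fin k, ¬ (gadget k).Adj (.L (Fin.last k)) (.S m) := by
    intro m; simp [gadget, gadgetRel, Fin.ext_iff]; have := m.isLt; omega
  have hRL : ¬ (gadget k).Adj (.R 0) (.L (Fin.last k)) := by
    simp [gadget, gadgetRel, Fin.ext_iff]
    intro x h1 h2; omega
  have hSS : ∀ m m' : Fin k, ¬ (gadget k).Adj (.S m) (.S m') := by
    intro m m'; simp [gadget, gadgetRel]
  -- the witness independent set of size k+2
  set W : Finset (GadgetV k) :=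
    insert (.R 0) (insert (.L (Fin.last k)) (Finset.univ.image GadgetV.S)) with hW
  have hSinj : Function.Injective (GadgetV.S (k := k)) := by
    intro a b hab; cases hab; rfl
  have hLnotmem : (GadgetV.L (Fin.last k)) ∉ Finset.univ.image (GadgetV.S (k := k)) := by
    simp
  have hRnotmem : (GadgetV.R 0 : GadgetV k) ∉
      insert (.L (Fin.last k)) (Finset.univ.image GadgetV.S) := by
    simp
  have hWcard : W.card = k + 2 := by
    rw [hW, Finset.card_insert_of_notMem hRnotmem, Finset.card_insert_of_notMem hLnotmem,
      Finset.card_image_of_injective _ hSinj, Finset.card_univ, Fintype.card_fin]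
  have hWmem : ∀ x ∈ W, x = GadgetV.R 0 ∨ x = .L (Fin.last k) ∨ ∃ m : Fin k, x = .S m := by
    intro x hx
    simp [hW] at hx
    rcases hx with h | h | ⟨m, h⟩
    · exact Or.inl h
    · exact Or.inr (Or.inl h)
    · exact Or.inr (Or.inr ⟨m, h.symm⟩)
  have hWind : (↑W : Set (GadgetV k)).Pairwise (fun a b => ¬ (gadget k).Adj a b) := by
    intro a ha b hb hne hab
    rcases hWmem a ha with rfl | rfl | ⟨m, rfl⟩ <;> rcases hWmem b hb with rfl | rfl | ⟨m', rfl⟩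
    · exact hne rfl
    · exact hRL hab
    · exact hRS m' hab
    · exact hRL hab.symm
    · exact hne rfl
    · exact hLS m' hab
    · exact hRS m hab.symm
    · exact hLS m hab.symm
    · exact hSS m m' hab
  have hbdd : BddAbove {n | ∃ s : Finset (GadgetV k), ↑s ⊆ (Set.univ : Set (GadgetV k)) ∧
      (↑s : Set (GadgetV k)).Pairwise (fun a b => ¬ (gadget k).Adj a b) ∧ s.card = n} := by
    refine ⟨Fintype.card (GadgetV k), fun n hn => ?_⟩
    obtain ⟨s, -, -, hc⟩ := hn
    exact hc ▸ Finset.card_le_univ s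
  have halpha : k + 2 ≤ alphaOn (gadget k) Set.univ :=
    le_csSup hbdd ⟨W, by simp, hWind, hWcard⟩
  -- I has at most k+1 elements
  have hidx : ∀ x ∈ I, ∃ j : Fin (k+1), x = GadgetV.L j ∨ x = GadgetV.R j := by
    intro x hx
    cases x with
    | L j => exact ⟨j, Or.inl rfl⟩
    | R j => exact ⟨j, Or.inr rfl⟩
    | S m => exact absurd hx (hno m)
  have hadjRL : ∀ j : Fin (k+1), (gadget k).Adj (.R j) (.L j) := by
    intro j
    simp only [gadget, SimpleGraph.fromRel_adj]
    exact ⟨by simp, Or.inl (Or.inl ⟨j, rfl, rfl⟩)⟩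
  have hcard : I.card ≤ k + 1 := by
    have := Finset.card_le_card_of_injOn
      (f := fun x : GadgetV k => match x with
        | .L j => j | .R j => j | .S _ => (0 : Fin (k+1)))
      (s := I) (t := Finset.univ) (fun _ _ => Finset.mem_univ _) ?_
    · simpa using this
    · intro x hx y hy hxy
      obtain ⟨j, hj⟩ := hidx x hx
      obtain ⟨j', hj'⟩ := hidx y hy
      rcases hj with rfl | rfl <;> rcases hj' with rfl | rfl <;> simp_all
      · exact absurd ((hadjRL j').symm) (hind hx hy (by simp))
      · exact absurd (hadjRL j') (hind hx hy (by simp))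
  omega
end

section
/- For each spike vertex s_i of the clause gadget 𝒢_k, there exists a maximum independent set I of 𝒢_k such that s_i is the only spike vertex contained in I. -/
open SimpleGraph

/-!
The vertices of `𝒢_k` are covered by `k + 2` cliques: the triangles `T_1, …, T_k`, `{r_0}` and
`{l_{k+1}}`, so an independent set has at most `k + 2` vertices. For the spike `s_{m+1}`, the set
`r_0, …, r_m, s_{m+1}, l_{m+2}, …, l_{k+1}` is independent of size `k + 2`, hence maximum, and
contains no other spike.
-/

namespace SimpleGraph

variable {V : Type*} {G : SimpleGraph V}

theorem IsIndepSet.card_le_of_isClique_fiber {W : Type*} {s : Finset V} (hs : G.IsIndepSet ↑s)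
    (f : V → W) {t : Finset W} (hst : Set.MapsTo f ↑s ↑t) (hf : ∀ w, G.IsClique (f ⁻¹' {w})) :
    s.card ≤ t.card :=
  Finset.card_le_card_of_injOn f hst fun u hu v hv huv ↦
    by_contra fun hne ↦ hs hu hv hne (hf (f v) huv rfl hne)

end SimpleGraph

theorem alphaOn_eq_card {V : Type*} [Fintype V] {G : SimpleGraph V} {A : Set V} {s : Finset V}
    (hsA : ↑s ⊆ A) (hs : G.IsIndepSet ↑s)
    (hmax : ∀ t : Finset V, ↑t ⊆ A → G.IsIndepSet ↑t → t.card ≤ s.card) :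
    alphaOn G A = s.card :=
  IsGreatest.csSup_eq ⟨⟨s, hsA, hs, rfl⟩, by rintro _ ⟨t, htA, ht, rfl⟩; exact hmax t htA ht⟩

namespace GadgetV

variable {k : ℕ}

@[simp] theorem gadget_adj_L_R {i j : Fin (k + 1)} :
    (gadget k).Adj (L i) (R j) ↔ (i : ℕ) = j ∨ (i : ℕ) + 1 = j := by
  simp only [gadget, fromRel_adj, gadgetRel, ne_eq, reduceCtorEq, not_false_eq_true, L.injEq,
    R.injEq, and_false, exists_false, or_false, false_or, true_and, exists_eq_left']
  rw [Fin.ext_iff, or_comm]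
  refine or_congr_right ⟨?_, fun h ↦ ⟨⟨i, by omega⟩, Fin.ext rfl, Fin.ext (by simp [h])⟩⟩
  rintro ⟨m, rfl, rfl⟩
  simp

@[simp] theorem gadget_adj_L_S {i : Fin (k + 1)} {m : Fin k} :
    (gadget k).Adj (L i) (S m) ↔ (i : ℕ) = m := by
  simp [gadget, gadgetRel, Fin.ext_iff (a := i)]

@[simp] theorem gadget_adj_R_S {i : Fin (k + 1)} {m : Fin k} :
    (gadget k).Adj (R i) (S m) ↔ (i : ℕ) = m + 1 := by
  simp [gadget, gadgetRel, Fin.ext_iff (a := i)]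

@[simp] theorem gadget_adj_R_L {i j : Fin (k + 1)} :
    (gadget k).Adj (R j) (L i) ↔ (i : ℕ) = j ∨ (i : ℕ) + 1 = j := by
  rw [adj_comm, gadget_adj_L_R]

@[simp] theorem gadget_adj_S_L {i : Fin (k + 1)} {m : Fin k} :
    (gadget k).Adj (S m) (L i) ↔ (i : ℕ) = m := by
  rw [adj_comm, gadget_adj_L_S]

@[simp] theorem gadget_adj_S_R {i : Fin (k + 1)} {m : Fin k} :
    (gadget k).Adj (S m) (R i) ↔ (i : ℕ) = m + 1 := by
  rw [adj_comm, gadget_adj_R_S]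

@[simp] theorem not_gadget_adj_L_L {i j : Fin (k + 1)} : ¬ (gadget k).Adj (L i) (L j) := by
  simp [gadget, gadgetRel]

@[simp] theorem not_gadget_adj_R_R {i j : Fin (k + 1)} : ¬ (gadget k).Adj (R i) (R j) := by
  simp [gadget, gadgetRel]

@[simp] theorem not_gadget_adj_S_S {m m' : Fin k} : ¬ (gadget k).Adj (S m) (S m') := by
  simp [gadget, gadgetRel]

/-- Labels a partition of the vertices into `k + 2` cliques: the triangle `T_{m+1}` gets `m`,
`{r_0}` gets `k` and `{l_{k+1}}` gets `k + 1`. -/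
def triangleIndex : GadgetV k → ℕ
  | L i => if (i : ℕ) = k then k + 1 else i
  | R j => if (j : ℕ) = 0 then k else j - 1
  | S m => m

theorem triangleIndex_lt (v : GadgetV k) : triangleIndex v < k + 2 := by
  cases v with
  | L i => have := i.isLt; simp only [triangleIndex]; split_ifs <;> omega
  | R j => have := j.isLt; simp only [triangleIndex]; split_ifs <;> omega
  | S m => have := m.isLt; simp only [triangleIndex]; omega

theorem isClique_triangleIndex_fiber (n : ℕ) : (gadget k).IsClique (triangleIndex ⁻¹' {n}) := by
  rintro u (rfl : _ = n) v hv hne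
  cases u <;> cases v <;>
    simp only [Set.mem_preimage, Set.mem_singleton_iff, triangleIndex] at hv <;>
    (try split_ifs at hv) <;> simp [Fin.ext_iff] at hne ⊢ <;> omega

theorem card_le_of_isIndepSet {s : Finset (GadgetV k)} (hs : (gadget k).IsIndepSet ↑s) :
    s.card ≤ k + 2 := by
  simpa using hs.card_le_of_isClique_fiber triangleIndex (t := Finset.range (k + 2))
    (fun v _ ↦ Finset.mem_range.2 (triangleIndex_lt v)) isClique_triangleIndex_fiber

def spikeIndepSet (m : Fin k) : Finset (GadgetV k) :=
  (Finset.Iic m.castSucc).image R ∪ insert (S m) ((Finset.Ioi m.castSucc).image L)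

theorem S_mem_spikeIndepSet {m m' : Fin k} : S m' ∈ spikeIndepSet m ↔ m' = m := by
  simp [spikeIndepSet]

theorem card_spikeIndepSet (m : Fin k) : (spikeIndepSet m).card = k + 2 := by
  rw [spikeIndepSet, Finset.card_union_of_disjoint (by simp [Finset.disjoint_left]),
    Finset.card_insert_of_notMem (by simp),
    Finset.card_image_of_injective _ fun _ _ ↦ R.inj,
    Finset.card_image_of_injective _ fun _ _ ↦ L.inj, Fin.card_Iic, Fin.card_Ioi, Fin.val_castSucc]
  omega

theorem isIndepSet_spikeIndepSet (m : Fin k) : (gadget k).IsIndepSet ↑(spikeIndepSet m) := by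
  intro u hu v hv _
  simp only [spikeIndepSet, Finset.coe_union, Finset.coe_image, Finset.coe_insert, Set.mem_union,
    Set.mem_image, Set.mem_insert_iff, Finset.coe_Iic, Finset.coe_Ioi, Set.mem_Iic, Set.mem_Ioi,
    Fin.le_def, Fin.lt_def, Fin.val_castSucc] at hu hv
  rcases hu with ⟨i, hi, rfl⟩ | rfl | ⟨i, hi, rfl⟩ <;>
    rcases hv with ⟨j, hj, rfl⟩ | rfl | ⟨j, hj, rfl⟩ <;>
    simp <;> omega

end GadgetV

theorem stmt12_general (k : ℕ) (m : Fin k) :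
    ∃ I : Finset (GadgetV k),
      (↑I : Set (GadgetV k)).Pairwise (fun a b => ¬ (gadget k).Adj a b) ∧
      I.card = alphaOn (gadget k) Set.univ ∧
      GadgetV.S m ∈ I ∧ ∀ m' : Fin k, GadgetV.S m' ∈ I → m' = m := by
  have hI := GadgetV.isIndepSet_spikeIndepSet m
  refine ⟨_, hI, ?_, GadgetV.S_mem_spikeIndepSet.2 rfl, fun _ ↦ GadgetV.S_mem_spikeIndepSet.1⟩
  refine (alphaOn_eq_card (Set.subset_univ _) hI fun t _ ht ↦ ?_).symm
  exact GadgetV.card_spikeIndepSet m ▸ GadgetV.card_le_of_isIndepSet ht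

theorem stmt12 (k : ℕ) (hk : 1 ≤ k) (m : Fin k) :
    ∃ I : Finset (GadgetV k),
      (↑I : Set (GadgetV k)).Pairwise (fun a b => ¬ (gadget k).Adj a b) ∧
      I.card = alphaOn (gadget k) Set.univ ∧
      GadgetV.S m ∈ I ∧ ∀ m' : Fin k, GadgetV.S m' ∈ I → m' = m :=
  stmt12_general k m
end

section
/- A CNF formula F with clauses C_1,...,C_m (clause C_j having h(j) literals) over variables x_1,...,x_n is satisfiable if and only if the graph G constructed from F (variable edges t_i f_i, a clause gadget 𝒢_{h(j)} for each clause, and for the r-th literal of C_j an edge from spike s_r to f_i if the literal is x_i, or to t_i if the literal is ¬x_i) has an independent set of size n + Σ_{j=1}^m (h(j) + 2). -/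
open SimpleGraph

/-- The graph built from a CNF formula with `n` variables and `m` clauses, where clause `j`
has `h j` literals and its `r`-th literal is the variable `(lit j r).1`, positive iff
`(lit j r).2 = true`. The vertex `Sum.inl (i, true)` is `t_i`, `Sum.inl (i, false)` is `f_i`,
with edges `t_i f_i`; there is a clause gadget `𝒢 (h j)` for each clause `j`, and the spike
`s_{r+1}` of gadget `j` is joined to `f_i` if the `r`-th literal of clause `j` is `x_i`, and
to `t_i` if it is `¬ x_i`. -/
def satGraph (n m : ℕ) (h : Fin m → ℕ) (lit : (j : Fin m) → Fin (h j) → Fin n × Bool) :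
    SimpleGraph ((Fin n × Bool) ⊕ (Σ j : Fin m, GadgetV (h j))) :=
  SimpleGraph.fromRel (fun x y =>
    (∃ i : Fin n, x = .inl (i, true) ∧ y = .inl (i, false)) ∨
    (∃ j : Fin m, ∃ a b : GadgetV (h j), gadgetRel (h j) a b ∧ x = .inr ⟨j, a⟩ ∧ y = .inr ⟨j, b⟩) ∨
    (∃ j : Fin m, ∃ r : Fin (h j),
      x = .inr ⟨j, GadgetV.S r⟩ ∧ y = .inl ((lit j r).1, !(lit j r).2)))

namespace Aux17
open GadgetV Finset

/-- clique index map witnessing α(𝒢 k) ≤ k+2 -/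
def cliq {k : ℕ} : GadgetV k → Fin (k + 2)
  | .L j => ⟨j.val + 1, Nat.succ_lt_succ j.isLt⟩
  | .R j => ⟨j.val, Nat.lt_succ_of_lt j.isLt⟩
  | .S q => ⟨q.val + 1, Nat.succ_lt_succ (Nat.lt_succ_of_lt q.isLt)⟩

lemma cliq_eq {k : ℕ} (a b : GadgetV k) (hab : cliq a = cliq b) :
    a = b ∨ gadgetRel k a b ∨ gadgetRel k b a := by
  cases a <;> cases b <;> simp only [cliq, Fin.mk.injEq] at hab
  case L.L j j' => exact Or.inl (by simp [Fin.ext_iff]; omega)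
  case L.R j j' =>
    refine Or.inr (Or.inl (Or.inr ⟨⟨j.val, by omega⟩, Or.inl ⟨?_, ?_⟩⟩)) <;>
      simp [Fin.ext_iff] <;> omega
  case L.S j q =>
    refine Or.inr (Or.inl (Or.inr ⟨q, Or.inr (Or.inl ⟨?_, rfl⟩)⟩))
    simp [Fin.ext_iff]; omega
  case R.L j' j =>
    refine Or.inr (Or.inr (Or.inr ⟨⟨j.val, by omega⟩, Or.inl ⟨?_, ?_⟩⟩)) <;>
      simp [Fin.ext_iff] <;> omega
  case R.R j j' => exact Or.inl (by simp [Fin.ext_iff]; omega)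
  case R.S j q =>
    refine Or.inr (Or.inl (Or.inr ⟨q, Or.inr (Or.inr ⟨?_, rfl⟩)⟩))
    simp [Fin.ext_iff]; omega
  case S.L q j =>
    refine Or.inr (Or.inr (Or.inr ⟨q, Or.inr (Or.inl ⟨?_, rfl⟩)⟩))
    simp [Fin.ext_iff]; omega
  case S.R q j =>
    refine Or.inr (Or.inr (Or.inr ⟨q, Or.inr (Or.inr ⟨?_, rfl⟩)⟩))
    simp [Fin.ext_iff]; omega
  case S.S q q' => exact Or.inl (by simp [Fin.ext_iff]; omega)

lemma gadget_card_le {k : ℕ} (F : Finset (GadgetV k))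
    (hF : ∀ a ∈ F, ∀ b ∈ F, a ≠ b → ¬ gadgetRel k a b) : F.card ≤ k + 2 := by
  have h1 : F.card ≤ (Finset.univ : Finset (Fin (k + 2))).card := by
    refine Finset.card_le_card_of_injOn cliq (fun _ _ => Finset.mem_univ _) ?_
    intro a ha b hb he
    by_contra hne
    rcases cliq_eq a b he with h | h | h
    · exact hne h
    · exact hF a ha b hb hne h
    · exact hF b hb a ha (Ne.symm hne) h
  simpa using h1

def cliq' {k : ℕ} : GadgetV k → Fin (k + 1)
  | .L j => j
  | .R j => j
  | .S q => q.castSucc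

lemma gadget_nospike_card_le {k : ℕ} (F : Finset (GadgetV k))
    (hF : ∀ a ∈ F, ∀ b ∈ F, a ≠ b → ¬ gadgetRel k a b)
    (hS : ∀ q : Fin k, GadgetV.S q ∉ F) : F.card ≤ k + 1 := by
  have h1 : F.card ≤ (Finset.univ : Finset (Fin (k + 1))).card := by
    refine Finset.card_le_card_of_injOn cliq' (fun _ _ => Finset.mem_univ _) ?_
    intro a ha b hb he
    cases a <;> cases b <;> simp only [cliq'] at he
    case L.L => simp [he]
    case R.R => simp [he]
    case L.R j j' =>
      subst he
      exact absurd (Or.inl ⟨j, rfl, rfl⟩ : gadgetRel k (GadgetV.R j) (GadgetV.L j))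
        (hF _ hb _ ha (by simp))
    case R.L j' j =>
      subst he
      exact absurd (Or.inl ⟨j', rfl, rfl⟩ : gadgetRel k (GadgetV.R j') (GadgetV.L j'))
        (hF _ ha _ hb (by simp))
    all_goals first
      | exact absurd ha (hS _)
      | exact absurd hb (hS _)
  simpa using h1

/-- Independent set of the gadget of size k+2 selecting spike r. -/
def Gset {k : ℕ} (r : Fin k) : Finset (GadgetV k) :=
  {GadgetV.S r} ∪ (Finset.Iic r.castSucc).image GadgetV.R ∪
    (Finset.Ioi r.castSucc).image GadgetV.L

lemma mem_Gset_S {k : ℕ} {r q : Fin k} (hq : GadgetV.S q ∈ Gset r) : q = r := by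
  simpa [Gset] using hq

lemma mem_Gset_R {k : ℕ} {r : Fin k} {q : Fin (k+1)} (hq : GadgetV.R q ∈ Gset r) :
    q.val ≤ r.val := by
  have := (by simpa [Gset, Fin.le_iff_val_le_val] using hq : q ≤ r.castSucc)
  simpa [Fin.le_iff_val_le_val] using this

lemma mem_Gset_L {k : ℕ} {r : Fin k} {q : Fin (k+1)} (hq : GadgetV.L q ∈ Gset r) :
    r.val < q.val := by
  have := (by simpa [Gset] using hq : r.castSucc < q)
  simpa [Fin.lt_iff_val_lt_val] using this

lemma S_mem_Gset {k : ℕ} (r : Fin k) : GadgetV.S r ∈ Gset r := by simp [Gset]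

lemma Gset_ind {k : ℕ} (r : Fin k) :
    ∀ a ∈ Gset r, ∀ b ∈ Gset r, ¬ gadgetRel k a b := by
  intro a ha b hb hrel
  rcases hrel with ⟨j, rfl, rfl⟩ | ⟨q, ⟨rfl, rfl⟩ | ⟨rfl, rfl⟩ | ⟨rfl, rfl⟩⟩
  · have h1 := mem_Gset_R ha
    have h2 := mem_Gset_L hb
    omega
  · have h1 : r.val < q.val := by simpa using mem_Gset_L ha
    have h2 : q.val + 1 ≤ r.val := by simpa using mem_Gset_R hb
    omega
  · have h1 := mem_Gset_L ha
    have h2 := mem_Gset_S hb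
    subst h2
    simp at h1
  · have h1 := mem_Gset_R ha
    have h2 := mem_Gset_S hb
    subst h2
    have h1' : q.val + 1 ≤ q.val := by simpa using h1
    omega

lemma Gset_card {k : ℕ} (r : Fin k) : (Gset r).card = k + 2 := by
  have hLinj : Function.Injective (@GadgetV.L k) := fun a b e => by
    simpa using e
  have hRinj : Function.Injective (@GadgetV.R k) := fun a b e => by
    simpa using e
  have hd1 : Disjoint ({GadgetV.S r} : Finset (GadgetV k))
      ((Finset.Iic r.castSucc).image GadgetV.R) := by
    simp [Finset.disjoint_left]
  have hd2 : Disjoint ({GadgetV.S r} ∪ (Finset.Iic r.castSucc).image GadgetV.R)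
      ((Finset.Ioi r.castSucc).image GadgetV.L) := by
    simp [Finset.disjoint_left]
  rw [Gset, Finset.card_union_of_disjoint hd2, Finset.card_union_of_disjoint hd1,
    Finset.card_image_of_injective _ hRinj, Finset.card_image_of_injective _ hLinj,
    Finset.card_singleton, Fin.card_Iic, Fin.card_Ioi]
  simp [Fin.coe_castSucc]
  omega

end Aux17


def RelF (n m : ℕ) (h : Fin m → ℕ) (lit : (j : Fin m) → Fin (h j) → Fin n × Bool) :
    ((Fin n × Bool) ⊕ (Σ j : Fin m, GadgetV (h j))) →
    ((Fin n × Bool) ⊕ (Σ j : Fin m, GadgetV (h j))) → Prop := fun x y =>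
  (∃ i : Fin n, x = .inl (i, true) ∧ y = .inl (i, false)) ∨
  (∃ j : Fin m, ∃ a b : GadgetV (h j), gadgetRel (h j) a b ∧ x = .inr ⟨j, a⟩ ∧ y = .inr ⟨j, b⟩) ∨
  (∃ j : Fin m, ∃ r : Fin (h j),
    x = .inr ⟨j, GadgetV.S r⟩ ∧ y = .inl ((lit j r).1, !(lit j r).2))

lemma satGraph_adj (n m : ℕ) (h : Fin m → ℕ) (lit : (j : Fin m) → Fin (h j) → Fin n × Bool)
    (x y : (Fin n × Bool) ⊕ (Σ j : Fin m, GadgetV (h j))) :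
    (satGraph n m h lit).Adj x y ↔
      x ≠ y ∧ (RelF n m h lit x y ∨ RelF n m h lit y x) :=
  SimpleGraph.fromRel_adj _ x y

def pt (n : ℕ) {m : ℕ} {h : Fin m → ℕ} :
    ((Fin n × Bool) ⊕ (Σ j : Fin m, GadgetV (h j))) → Fin n ⊕ Fin m
  | .inl (i, _) => .inl i
  | .inr ⟨j, _⟩ => .inr j

set_option maxHeartbeats 1000000 in
theorem stmt17 (n m : ℕ) (h : Fin m → ℕ) (hh : ∀ j, 1 ≤ h j)
    (lit : (j : Fin m) → Fin (h j) → Fin n × Bool) :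
    (∃ φ : Fin n → Bool, ∀ j : Fin m, ∃ r : Fin (h j), φ (lit j r).1 = (lit j r).2) ↔
    (∃ I : Finset ((Fin n × Bool) ⊕ (Σ j : Fin m, GadgetV (h j))),
      (↑I : Set ((Fin n × Bool) ⊕ (Σ j : Fin m, GadgetV (h j)))).Pairwise
        (fun a b => ¬ (satGraph n m h lit).Adj a b) ∧
      I.card = n + ∑ j : Fin m, (h j + 2)) := by
  classical
  constructor
  · rintro ⟨φ, hφ⟩
    choose r hr using hφ
    set I : Finset ((Fin n × Bool) ⊕ (Σ j : Fin m, GadgetV (h j))) :=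
      (Finset.univ.image fun i : Fin n => (Sum.inl (i, φ i))) ∪
      Finset.univ.biUnion (fun j : Fin m =>
        (Aux17.Gset (r j)).image fun g => (Sum.inr ⟨j, g⟩)) with hI
    have hmemL : ∀ (i : Fin n) (b : Bool), Sum.inl (i, b) ∈ I → b = φ i := by
      intro i b hb
      rw [hI] at hb
      simp only [Finset.mem_union, Finset.mem_image, Finset.mem_biUnion,
        Finset.mem_univ, true_and] at hb
      rcases hb with ⟨i', hi'⟩ | ⟨j, g, hg, hgg⟩
      · obtain ⟨hi1, hi2⟩ : i' = i ∧ φ i' = b := by simpa using hi'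
        subst hi1; exact hi2.symm
      · exact absurd hgg (by simp)
    have hmemR : ∀ (j : Fin m) (g : GadgetV (h j)),
        Sum.inr ⟨j, g⟩ ∈ I → g ∈ Aux17.Gset (r j) := by
      intro j g hg
      rw [hI] at hg
      simp only [Finset.mem_union, Finset.mem_image, Finset.mem_biUnion,
        Finset.mem_univ, true_and] at hg
      rcases hg with ⟨i', hi'⟩ | ⟨j', g', hg', hgg⟩
      · exact absurd hi' (by simp)
      · obtain ⟨hj, hgeq⟩ : j' = j ∧ HEq g' g := by simpa using hgg
        subst hj
        rw [heq_eq_eq] at hgeq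
        subst hgeq
        exact hg'
    refine ⟨I, ?_, ?_⟩
    · intro x hx y hy hne hadj
      rw [satGraph_adj] at hadj
      have key : ∀ a ∈ I, ∀ b ∈ I, ¬ RelF n m h lit a b := by
        intro a ha b hb hrel
        rcases hrel with ⟨i, rfl, rfl⟩ | ⟨j, ga, gb, hgab, rfl, rfl⟩ | ⟨j, q, rfl, rfl⟩
        · have h1 := hmemL _ _ ha
          have h2 := hmemL _ _ hb
          rw [← h1] at h2; exact Bool.noConfusion h2
        · exact Aux17.Gset_ind (r j) ga (hmemR _ _ ha) gb (hmemR _ _ hb) hgab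
        · have h1 := Aux17.mem_Gset_S (hmemR _ _ ha)
          subst h1
          have h2 := hmemL _ _ hb
          rw [hr j] at h2
          simp at h2
      rcases hadj.2 with hrel | hrel
      · exact key x (Finset.mem_coe.1 hx) y (Finset.mem_coe.1 hy) hrel
      · exact key y (Finset.mem_coe.1 hy) x (Finset.mem_coe.1 hx) hrel
    · have hinj1 : Function.Injective
          (fun i : Fin n => (Sum.inl (i, φ i) : (Fin n × Bool) ⊕ (Σ j : Fin m, GadgetV (h j)))) := by
        intro a b e; simpa using (by simpa using e : a = b ∧ φ a = φ b).1
      have hdisj : Disjoint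
          (Finset.univ.image fun i : Fin n =>
            (Sum.inl (i, φ i) : (Fin n × Bool) ⊕ (Σ j : Fin m, GadgetV (h j))))
          (Finset.univ.biUnion (fun j : Fin m =>
            (Aux17.Gset (r j)).image fun g => (Sum.inr ⟨j, g⟩))) := by
        simp [Finset.disjoint_left]
      have hbu : (Finset.univ.biUnion (fun j : Fin m =>
            (Aux17.Gset (r j)).image fun g =>
              (Sum.inr ⟨j, g⟩ : (Fin n × Bool) ⊕ (Σ j : Fin m, GadgetV (h j))))).card
          = ∑ j : Fin m, (h j + 2) := by
        rw [Finset.card_biUnion]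
        · refine Finset.sum_congr rfl fun j _ => ?_
          have hinj2 : Function.Injective
              (fun g : GadgetV (h j) =>
                (Sum.inr ⟨j, g⟩ : (Fin n × Bool) ⊕ (Σ j : Fin m, GadgetV (h j)))) := by
            intro a b e
            simpa using e
          rw [Finset.card_image_of_injective _ hinj2, Aux17.Gset_card]
        · intro j _ j' hj' hjj'
          simp only [Finset.disjoint_left, Finset.mem_image]
          rintro a ⟨g, hg, rfl⟩ ⟨g', hg', he⟩
          have hjj : j' = j ∧ HEq g' g := by simpa using he
          exact hjj' hjj.1.symm
      rw [hI, Finset.card_union_of_disjoint hdisj,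
        Finset.card_image_of_injective _ hinj1, Finset.card_univ, Fintype.card_fin, hbu]
  · rintro ⟨I, hInd, hcard⟩
    have hfib : I.card = ∑ c : Fin n ⊕ Fin m,
        (I.filter (fun v => pt n v = c)).card :=
      Finset.card_eq_sum_card_fiberwise (fun x _ => Finset.mem_univ _)
    set g : Fin n ⊕ Fin m → ℕ := Sum.elim (fun _ => 1) (fun j => h j + 2) with hg
    -- per-variable fiber bound
    have hbL : ∀ i : Fin n, (I.filter (fun v => pt n v = Sum.inl i)).card ≤ 1 := by
      intro i
      rw [Finset.card_le_one]
      intro a ha b hb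
      obtain ⟨haI, hpa⟩ := Finset.mem_filter.1 ha
      obtain ⟨hbI, hpb⟩ := Finset.mem_filter.1 hb
      obtain (⟨ia, ba⟩ | ⟨ja, ga⟩) := a
      · obtain (⟨ib, bb⟩ | ⟨jb, gb⟩) := b
        · have hia : i = ia := by symm; simpa [pt] using hpa
          have hib : i = ib := by symm; simpa [pt] using hpb
          subst hia; subst hib
          by_contra hne
          have hbne : ba ≠ bb := by
            intro e; exact hne (by rw [e])
          have hadj : (satGraph n m h lit).Adj (Sum.inl (i, ba)) (Sum.inl (i, bb)) := by
            rw [satGraph_adj]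
            refine ⟨by simpa using hbne, ?_⟩
            cases ba <;> cases bb
            · exact absurd rfl hbne
            · exact Or.inr (Or.inl ⟨i, rfl, rfl⟩)
            · exact Or.inl (Or.inl ⟨i, rfl, rfl⟩)
            · exact absurd rfl hbne
          exact hInd (Finset.mem_coe.2 haI) (Finset.mem_coe.2 hbI) hne hadj
        · exact absurd hpb (by simp [pt])
      · exact absurd hpa (by simp [pt])
    -- per-clause fiber: it's the image of the gadget trace
    have hfibR : ∀ j : Fin m,
        I.filter (fun v => pt n v = Sum.inr j) =
          (Finset.univ.filter (fun g : GadgetV (h j) => Sum.inr ⟨j, g⟩ ∈ I)).image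
            (fun g => Sum.inr ⟨j, g⟩) := by
      intro j
      ext v
      simp only [Finset.mem_filter, Finset.mem_image, Finset.mem_univ, true_and]
      constructor
      · rintro ⟨hvI, hpv⟩
        obtain (⟨iv, bv⟩ | ⟨jv, gv⟩) := v
        · exact absurd hpv (by simp [pt])
        · have hjv : jv = j := by simpa [pt] using hpv
          subst hjv
          exact ⟨gv, hvI, rfl⟩
      · rintro ⟨gv, hgv, rfl⟩
        exact ⟨hgv, rfl⟩
    have hinjr : ∀ j : Fin m, Function.Injective
        (fun g : GadgetV (h j) =>
          (Sum.inr ⟨j, g⟩ : (Fin n × Bool) ⊕ (Σ j : Fin m, GadgetV (h j)))) := by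
      intro j a b e
      simpa using e
    have hFind : ∀ j : Fin m,
        ∀ a ∈ (Finset.univ.filter (fun g : GadgetV (h j) => Sum.inr ⟨j, g⟩ ∈ I)),
        ∀ b ∈ (Finset.univ.filter (fun g : GadgetV (h j) => Sum.inr ⟨j, g⟩ ∈ I)),
          a ≠ b → ¬ gadgetRel (h j) a b := by
      intro j a ha b hb hne hrel
      have haI := (Finset.mem_filter.1 ha).2
      have hbI := (Finset.mem_filter.1 hb).2
      have hadj : (satGraph n m h lit).Adj (Sum.inr ⟨j, a⟩) (Sum.inr ⟨j, b⟩) := by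
        rw [satGraph_adj]
        exact ⟨fun e => hne (hinjr j e), Or.inl (Or.inr (Or.inl ⟨j, a, b, hrel, rfl, rfl⟩))⟩
      exact hInd (Finset.mem_coe.2 haI) (Finset.mem_coe.2 hbI)
        (fun e => hne (hinjr j e)) hadj
    have hbR : ∀ j : Fin m, (I.filter (fun v => pt n v = Sum.inr j)).card ≤ h j + 2 := by
      intro j
      rw [hfibR j, Finset.card_image_of_injective _ (hinjr j)]
      exact Aux17.gadget_card_le _ (hFind j)
    have hle : ∀ c ∈ (Finset.univ : Finset (Fin n ⊕ Fin m)),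
        (I.filter (fun v => pt n v = c)).card ≤ g c := by
      rintro (i | j) _
      · exact hbL i
      · exact hbR j
    have hgsum : ∑ c : Fin n ⊕ Fin m, g c = n + ∑ j : Fin m, (h j + 2) := by
      rw [Fintype.sum_sum_type]
      simp [hg]
    have heq : ∀ c ∈ (Finset.univ : Finset (Fin n ⊕ Fin m)),
        (I.filter (fun v => pt n v = c)).card = g c :=
      (Finset.sum_eq_sum_iff_of_le hle).1 (by rw [← hfib, hcard, hgsum])
    -- define the assignment
    refine ⟨fun i => decide (Sum.inl (i, true) ∈ I), ?_⟩
    intro j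
    -- the gadget trace has h j + 2 elements, hence contains a spike
    have hcardj : (Finset.univ.filter
        (fun g : GadgetV (h j) => Sum.inr ⟨j, g⟩ ∈ I)).card = h j + 2 := by
      have := heq (Sum.inr j) (Finset.mem_univ _)
      rw [hfibR j, Finset.card_image_of_injective _ (hinjr j)] at this
      simpa [hg] using this
    have hspike : ∃ q : Fin (h j), GadgetV.S q ∈
        (Finset.univ.filter (fun g : GadgetV (h j) => Sum.inr ⟨j, g⟩ ∈ I)) := by
      by_contra hno
      push_neg at hno
      have := Aux17.gadget_nospike_card_le _ (hFind j) hno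
      omega
    obtain ⟨q, hq⟩ := hspike
    have hqI : Sum.inr ⟨j, GadgetV.S q⟩ ∈ I := (Finset.mem_filter.1 hq).2
    refine ⟨q, ?_⟩
    set i : Fin n := (lit j q).1 with hi
    set c : Bool := (lit j q).2 with hc
    -- the negated literal vertex is not in I
    have hwadj : (satGraph n m h lit).Adj (Sum.inr ⟨j, GadgetV.S q⟩) (Sum.inl (i, !c)) := by
      rw [satGraph_adj]
      exact ⟨by simp, Or.inl (Or.inr (Or.inr ⟨j, q, rfl, rfl⟩))⟩
    have hwnot : Sum.inl (i, !c) ∉ I := by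
      intro hw
      exact hInd (Finset.mem_coe.2 hqI) (Finset.mem_coe.2 hw) (by simp) hwadj
    -- the variable fiber is nonempty
    have hone : (I.filter (fun v => pt n v = Sum.inl i)).card = 1 := by
      have := heq (Sum.inl i) (Finset.mem_univ _)
      simpa [hg] using this
    obtain ⟨v, hv⟩ := Finset.card_eq_one.1 hone
    have hvmem : v ∈ I.filter (fun v => pt n v = Sum.inl i) := by rw [hv]; simp
    obtain ⟨hvI, hpv⟩ := Finset.mem_filter.1 hvmem
    obtain (⟨iv, bv⟩ | ⟨jv, gv⟩) := v
    · have hiv : iv = i := by simpa [pt] using hpv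
      subst hiv
      have hbv : bv = c := by
        by_contra hne
        have : bv = !c := by cases bv <;> cases c <;> simp_all
        rw [this] at hvI
        exact hwnot hvI
      subst hbv
      -- conclude: decide (inl (i, true) ∈ I) = c
      cases hcc : c
      · rw [hcc] at hwnot hvI
        simp only [Bool.not_false] at hwnot
        simpa [decide_eq_false_iff_not] using hwnot
      · rw [hcc] at hvI
        simpa using hvI
    · exact absurd hpv (by simp [pt])
end
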